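/- arXiv:1609.02537 — 13 statements merged into one kernel-verified Lean document; each statement's English description precedes it below -/
import Mathlib

section
/- If R is a commutative ring such that the zero-annihilator graph ZA(R) has no edges (for all distinct nonzero nonunits x, y, Ann_R(x) ∩ Ann_R(y) ≠ {0}), then R is a local ring and every nonunit x ∈ R satisfies Ann_R(x) ≠ {0}. -/
/-!
Two distinct nonzero nonunits always share a nonzero annihilator. If neither `a` nor `1 - a`
were a unit, a common annihilator `r` of `a` and `1 - a` would give `r = r * a + r * (1 - a) = 0`,
so `R` is local. A nonzero nonunit `x` is annihilated by `x - 1` if `x² = x`, by `x` if `x² = 0`,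
and otherwise by a common annihilator of `x` and `x²`.
-/

theorem Set.ne_singleton_iff_exists_ne {α : Type*} {s : Set α} {a : α} (ha : a ∈ s) :
    s ≠ {a} ↔ ∃ b ∈ s, b ≠ a :=
  (nontrivial_iff_ne_singleton ha).symm.trans (nontrivial_iff_exists_ne ha)

section CommonAnnihilator

variable {R : Type*} [CommRing R]

theorem isLocalRing_of_exists_common_annihilator [Nontrivial R]
    (h : ∀ x y : R, x ≠ 0 → ¬IsUnit x → y ≠ 0 → ¬IsUnit y → x ≠ y →
      ∃ r ≠ 0, r * x = 0 ∧ r * y = 0) :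
    IsLocalRing R := by
  refine .of_isUnit_or_isUnit_one_sub_self fun a ↦ ?_
  by_contra! ⟨ha, ha'⟩
  have ha0 : a ≠ 0 := by rintro rfl; simp at ha'
  have ha0' : 1 - a ≠ 0 := fun h ↦ ha (sub_eq_zero.mp h ▸ isUnit_one)
  have hne : a ≠ 1 - a := fun he ↦ ha (.of_mul_eq_one 2 (by linear_combination he))
  obtain ⟨r, hr0, hra, hra'⟩ := h a (1 - a) ha0 ha ha0' ha' hne
  exact hr0 (by linear_combination hra + hra')

theorem exists_ne_zero_mul_eq_zero_of_not_isUnit [Nontrivial R]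
    (h : ∀ x y : R, x ≠ 0 → ¬IsUnit x → y ≠ 0 → ¬IsUnit y → x ≠ y →
      ∃ r ≠ 0, r * x = 0 ∧ r * y = 0)
    {x : R} (hx : ¬IsUnit x) : ∃ r ≠ 0, r * x = 0 := by
  rcases eq_or_ne x 0 with rfl | hx0
  · exact ⟨1, one_ne_zero, mul_zero 1⟩
  rcases eq_or_ne (x * x) x with hxx | hxx
  · refine ⟨x - 1, fun h ↦ hx ?_, by linear_combination hxx⟩
    simp [sub_eq_zero.mp h]
  rcases eq_or_ne (x * x) 0 with hxx0 | hxx0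
  · exact ⟨x, hx0, hxx0⟩
  have hxxu : ¬IsUnit (x * x) := fun hu ↦ hx (isUnit_of_mul_isUnit_left hu)
  obtain ⟨r, hr0, hrx, -⟩ := h x (x * x) hx0 hx hxx0 hxxu hxx.symm
  exact ⟨r, hr0, hrx⟩

end CommonAnnihilator

theorem stmt2 {R : Type*} [CommRing R] [Nontrivial R]
    (h : ∀ x y : R, x ≠ 0 → ¬ IsUnit x → y ≠ 0 → ¬ IsUnit y → x ≠ y →
      {r : R | r * x = 0} ∩ {r : R | r * y = 0} ≠ {0}) :
    IsLocalRing R ∧ ∀ x : R, ¬ IsUnit x → {r : R | r * x = 0} ≠ {0} := by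
  have h' : ∀ x y : R, x ≠ 0 → ¬IsUnit x → y ≠ 0 → ¬IsUnit y → x ≠ y →
      ∃ r ≠ 0, r * x = 0 ∧ r * y = 0 := fun x y hx hxu hy hyu hxy ↦ by
    obtain ⟨r, ⟨hrx, hry⟩, hr0⟩ :=
      (Set.ne_singleton_iff_exists_ne (by simp)).mp (h x y hx hxu hy hyu hxy)
    exact ⟨r, hr0, hrx, hry⟩
  refine ⟨isLocalRing_of_exists_common_annihilator h', fun x hx ↦ ?_⟩
  obtain ⟨r, hr0, hrx⟩ := exists_ne_zero_mul_eq_zero_of_not_isUnit h' hx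
  exact (Set.ne_singleton_iff_exists_ne (by simp)).mpr ⟨r, hrx, hr0⟩
end

section
/- Let R be a local Bézout commutative ring such that Ann_R(x) ≠ {0} for every nonunit x. Then the zero-annihilator graph ZA(R) is empty: for all distinct nonzero nonunit x, y, Ann_R(x) ∩ Ann_R(y) ≠ {0}. -/
theorem stmt3 {R : Type*} [CommRing R] [Nontrivial R] [IsLocalRing R] [IsBezout R]
    (h : ∀ x : R, ¬ IsUnit x → {r : R | r * x = 0} ≠ {0}) :
    ∀ x y : R, x ≠ 0 → ¬ IsUnit x → y ≠ 0 → ¬ IsUnit y → x ≠ y →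
      {r : R | r * x = 0} ∩ {r : R | r * y = 0} ≠ {0} := by
  intro x y hx hxu hy hyu hxy
  -- span {x, y} is principal by Bézout
  obtain ⟨d, hd⟩ := (IsBezout.span_pair_isPrincipal x y)
  have hd' : Ideal.span {x, y} = Ideal.span ({d} : Set R) := hd
  -- d is a nonunit since x, y are in the maximal ideal
  have hdu : ¬ IsUnit d := by
    intro hdunit
    have : Ideal.span {x, y} = ⊤ := by
      rw [hd', Ideal.span_singleton_eq_top.mpr hdunit]
    have hxmem : x ∈ IsLocalRing.maximalIdeal R := hxu
    have hymem : y ∈ IsLocalRing.maximalIdeal R := hyu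
    have : Ideal.span {x, y} ≤ IsLocalRing.maximalIdeal R := by
      rw [Ideal.span_le]
      intro z hz
      rcases hz with h1 | h2
      · exact h1 ▸ hxmem
      · exact h2 ▸ hymem
    rw [‹Ideal.span {x, y} = ⊤›] at this
    exact (IsLocalRing.maximalIdeal.isMaximal R).ne_top (top_le_iff.mp this)
  -- get nonzero annihilator of d
  obtain ⟨r, hrd, hr0⟩ : ∃ r : R, r * d = 0 ∧ r ≠ 0 := by
    by_contra hc
    push_neg at hc
    apply h d hdu
    ext z
    simp only [Set.mem_setOf_eq, Set.mem_singleton_iff]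
    exact ⟨fun hz => hc z hz, fun hz => by rw [hz, zero_mul]⟩
  -- x and y are multiples of d
  have hxd : x ∈ Ideal.span ({d} : Set R) := by
    rw [← hd']; exact Ideal.subset_span (by simp)
  have hyd : y ∈ Ideal.span ({d} : Set R) := by
    rw [← hd']; exact Ideal.subset_span (by simp)
  obtain ⟨a, rfl⟩ := Ideal.mem_span_singleton'.mp hxd
  obtain ⟨b, rfl⟩ := Ideal.mem_span_singleton'.mp hyd
  intro heq
  have hr1 : r * (a * d) = 0 := by rw [mul_comm a d, ← mul_assoc, hrd, zero_mul]
  have hr2 : r * (b * d) = 0 := by rw [mul_comm b d, ← mul_assoc, hrd, zero_mul]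
  have : r ∈ ({0} : Set R) := heq ▸ Set.mem_inter hr1 hr2
  exact hr0 this
end

section
/- Let R be a commutative ring with Krull dimension 0. Then every nonzero nonunit element x of R has nonzero annihilator: Ann_R(x) ≠ {0}. -/
theorem stmt5 {R : Type*} [CommRing R] [Nontrivial R]
    (hdim : ringKrullDim R = 0) :
    ∀ x : R, x ≠ 0 → ¬ IsUnit x → {r : R | r * x = 0} ≠ {0} := by
  intro x hx hxu hann
  -- x is a non-zero-divisor
  have hreg : ∀ n : ℕ, ∀ s : R, s * x ^ n = 0 → s = 0 := by
    intro n
    induction n with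
    | zero => intro s hs; simpa using hs
    | succ n ih =>
      intro s hs
      have : s * x ^ n ∈ {r : R | r * x = 0} := by
        simp only [Set.mem_setOf_eq]
        rw [pow_succ, ← mul_assoc] at hs
        exact hs
      rw [hann] at this
      exact ih s this
  -- x lies in a maximal ideal m
  obtain ⟨m, hm, hxm⟩ := (Ideal.span {x}).exists_le_maximal
    (by simpa [Ideal.span_singleton_eq_top] using hxu)
  have hxm : x ∈ m := hxm (Ideal.subset_span rfl)
  -- the multiplicative set S = {s * x^n : s ∉ m}
  let S : Submonoid R :=
    { carrier := {r | ∃ s ∉ m, ∃ n : ℕ, r = s * x ^ n}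
      one_mem' := ⟨1, m.primeCompl.one_mem, 0, by simp⟩
      mul_mem' := by
        rintro a b ⟨s, hs, n, rfl⟩ ⟨t, ht, k, rfl⟩
        exact ⟨s * t, m.primeCompl.mul_mem hs ht, n + k, by ring⟩ }
  have hdisj : Disjoint ((⊥ : Ideal R) : Set R) (S : Set R) := by
    rw [Set.disjoint_left]
    rintro r hr ⟨s, hs, n, rfl⟩
    simp only [SetLike.mem_coe, Ideal.mem_bot] at hr
    exact hs (hreg n s hr ▸ m.zero_mem)
  obtain ⟨q, hq, -, hqS⟩ := Ideal.exists_le_prime_disjoint _ S hdisj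
  have hqm : q ≤ m := by
    intro r hr
    by_contra hrm
    exact Set.disjoint_left.mp hqS hr ⟨r, hrm, 0, by simp⟩
  have hxq : x ∉ q := fun h =>
    Set.disjoint_left.mp hqS h ⟨1, m.primeCompl.one_mem, 1, by simp⟩
  -- strict chain q < m in the prime spectrum
  have hlt : (⟨q, hq⟩ : PrimeSpectrum R) < ⟨m, hm.isPrime⟩ := by
    refine lt_of_le_of_ne hqm ?_
    intro h
    exact hxq (by rw [show q = m from congrArg PrimeSpectrum.asIdeal h]; exact hxm)
  have := Order.LTSeries.length_le_krullDim
    ((RelSeries.singleton _ (⟨q, hq⟩ : PrimeSpectrum R)).snoc ⟨m, hm.isPrime⟩ hlt)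
  rw [ringKrullDim] at hdim
  rw [hdim] at this
  simp [RelSeries.snoc, RelSeries.singleton] at this
  exact absurd this (by norm_num)
end

section
/- Let R = F₁ × F₂ be the product of two fields. Then ZA(R) is a complete bipartite graph: the vertices of ZA(R) are exactly the elements (u,0) with u ∈ F₁ nonzero and (0,v) with v ∈ F₂ nonzero; every (u,0) is adjacent to every (0,v); and no two vertices (u₁,0), (u₂,0) (resp. (0,v₁), (0,v₂)) are adjacent. -/
theorem stmt7 {F₁ F₂ : Type*} [Field F₁] [Field F₂] :
    (∀ z : F₁ × F₂, (z ≠ 0 ∧ ¬ IsUnit z) ↔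
      ((∃ u : F₁, u ≠ 0 ∧ z = (u, 0)) ∨ (∃ v : F₂, v ≠ 0 ∧ z = (0, v)))) ∧
    (∀ (u : F₁) (v : F₂), u ≠ 0 → v ≠ 0 →
      {r : F₁ × F₂ | r * (u, 0) = 0} ∩ {r : F₁ × F₂ | r * (0, v) = 0} = {0}) ∧
    (∀ u₁ u₂ : F₁, u₁ ≠ 0 → u₂ ≠ 0 → u₁ ≠ u₂ →
      {r : F₁ × F₂ | r * (u₁, 0) = 0} ∩ {r : F₁ × F₂ | r * (u₂, 0) = 0} ≠ {0}) ∧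
    (∀ v₁ v₂ : F₂, v₁ ≠ 0 → v₂ ≠ 0 → v₁ ≠ v₂ →
      {r : F₁ × F₂ | r * (0, v₁) = 0} ∩ {r : F₁ × F₂ | r * (0, v₂) = 0} ≠ {0}) := by
  refine ⟨?_, ?_, ?_, ?_⟩
  · rintro ⟨a, b⟩
    constructor
    · rintro ⟨hne, hnu⟩
      rcases eq_or_ne a 0 with ha | ha
      · rcases eq_or_ne b 0 with hb | hb
        · exact absurd (by simp [ha, hb, Prod.ext_iff]) hne
        · exact Or.inr ⟨b, hb, by simp [ha]⟩
      · rcases eq_or_ne b 0 with hb | hb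
        · exact Or.inl ⟨a, ha, by simp [hb]⟩
        · exact absurd ⟨⟨(a, b), (a⁻¹, b⁻¹), by simp [Prod.ext_iff, ha, hb],
            by simp [Prod.ext_iff, ha, hb]⟩, rfl⟩ hnu
    · rintro (⟨u, hu, h⟩ | ⟨v, hv, h⟩) <;>
      · rw [h]
        refine ⟨by simp [Prod.ext_iff]; assumption, fun hU => ?_⟩
        first
        | exact not_isUnit_zero (M₀ := F₂) (by simpa using hU.map (RingHom.snd F₁ F₂))
        | exact not_isUnit_zero (M₀ := F₁) (by simpa using hU.map (RingHom.fst F₁ F₂))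
  · intro u v hu hv
    ext ⟨a, b⟩
    simp only [Set.mem_inter_iff, Set.mem_setOf_eq, Prod.mk_mul_mk, Prod.ext_iff,
      Set.mem_singleton_iff, Prod.fst_mul, Prod.snd_mul]
    constructor
    · rintro ⟨⟨h1, _⟩, ⟨_, h2⟩⟩
      constructor <;> simp_all [mul_eq_zero]
    · rintro ⟨rfl, rfl⟩; simp
  · intro u₁ u₂ hu₁ hu₂ hne h
    have : ((0 : F₁), (1 : F₂)) ∈ ({r : F₁ × F₂ | r * (u₁, 0) = 0} ∩
        {r : F₁ × F₂ | r * (u₂, 0) = 0}) := by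
      constructor <;> simp [Prod.ext_iff]
    rw [h] at this
    simp [Prod.ext_iff] at this
  · intro v₁ v₂ hv₁ hv₂ hne h
    have : ((1 : F₁), (0 : F₂)) ∈ ({r : F₁ × F₂ | r * (0, v₁) = 0} ∩
        {r : F₁ × F₂ | r * (0, v₂) = 0}) := by
      constructor <;> simp [Prod.ext_iff]
    rw [h] at this
    simp [Prod.ext_iff] at this
end

section
/- For a commutative ring R with a nontrivial idempotent e (arising e.g. when R ≅ R₁ × R₂), if ZA(R) is a bipartite graph with no isolated vertices and R is a finite product of fields F₁ × ⋯ × Fₙ with n ≥ 3, then ZA(R) contains a triangle; specifically, in F₁ × ⋯ × Fₙ with n ≥ 3, the elements (0,1,1,…,1), (1,0,1,…,1), (1,1,0,1,…,1) are pairwise adjacent. -/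
theorem stmt8 {n : ℕ} (hn : 3 ≤ n) (F : Fin n → Type*) [∀ i, Field (F i)]
    (e : Fin 3 → (Π i, F i))
    (he : ∀ k : Fin 3, e k = fun i => if i = (Fin.castLE hn k) then 0 else 1) :
    (∀ k l : Fin 3, k ≠ l → e k ≠ e l) ∧
    (∀ k : Fin 3, e k ≠ 0 ∧ ¬ IsUnit (e k)) ∧
    (∀ k l : Fin 3, k ≠ l →
      {r : Π i, F i | r * e k = 0} ∩ {r : Π i, F i | r * e l = 0} = {0}) := by
  have hinj : Function.Injective (Fin.castLE hn) := Fin.castLE_injective hn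
  refine ⟨?_, ?_, ?_⟩
  · intro k l hkl h
    have := congrFun h (Fin.castLE hn k)
    rw [he k, he l] at this
    simp only [if_pos rfl] at this
    rw [if_neg (fun h' => hkl (hinj h'))] at this
    exact one_ne_zero this.symm
  · intro k
    constructor
    · intro h
      -- find index j ≠ castLE k
      haveI : Nontrivial (Fin n) := ⟨⟨⟨0, by omega⟩, ⟨1, by omega⟩, by simp [Fin.ext_iff]⟩⟩
      rcases exists_ne (Fin.castLE hn k) with ⟨j, hj⟩
      have := congrFun h j
      rw [he k] at this
      simp only [if_neg hj, Pi.zero_apply] at this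
      exact one_ne_zero this
    · intro h
      rcases h with ⟨u, hu⟩
      have h1 : (u : Π i, F i) * ↑u⁻¹ = 1 := u.mul_inv
      rw [hu, he k] at h1
      have := congrFun h1 (Fin.castLE hn k)
      simp at this
  · intro k l hkl
    ext r
    simp only [Set.mem_inter_iff, Set.mem_setOf_eq, Set.mem_singleton_iff]
    constructor
    · rintro ⟨h1, h2⟩
      funext i
      by_cases hi : i = Fin.castLE hn k
      · have := congrFun h2 i
        rw [he l] at this
        have hne : i ≠ Fin.castLE hn l := by
          rw [hi]; exact fun h' => hkl (hinj h')
        simpa [if_neg hne] using this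
      · have := congrFun h1 i
        rw [he k] at this
        simpa [if_neg hi] using this
    · rintro rfl
      simp
end

section
/- Let R be a semiprimitive commutative ring (Jac(R) = 0) with a principal maximal ideal m = Rt. Then ZA(R) is connected with diameter at most 4: for any two distinct nonzero nonunit elements x, y, there is a path of length at most 4 between them in ZA(R). -/
/-!
Let `m = Rt` be maximal. If `z t = 0` then `z` lies in every maximal ideal other than `m`, since
those do not contain `t`; if moreover `z v = 0` with `v ∉ m`, then also `z ∈ m`, so `z ∈ Jac(R) = 0`.
Hence every vertex outside `m` is adjacent to `t`. A vertex `v ∈ m` is not in `Jac(R)`, so some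
`c = v s + 1` is a nonunit; `c ∉ m`, and `r v = 0` forces `r c = r`, so `v — c — t` is a walk.
Thus every vertex is within distance 2 of `t`, and any two vertices within distance 4 of each other.
-/

open SimpleGraph

/-- The graph `ZA(R)`. -/
def zeroAnnihilatorGraph (R : Type*) [CommRing R] : SimpleGraph {a : R // a ≠ 0 ∧ ¬IsUnit a} where
  Adj a b := (a : R) ≠ b ∧ {r : R | r * a = 0} ∩ {r : R | r * b = 0} = {0}
  symm := ⟨fun _ _ h => ⟨h.1.symm, by rw [Set.inter_comm]; exact h.2⟩⟩
  loopless := ⟨fun _ h => h.1 rfl⟩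

namespace zeroAnnihilatorGraph

variable {R : Type*} [CommRing R]

theorem adj_iff {a b : {a : R // a ≠ 0 ∧ ¬IsUnit a}} : (zeroAnnihilatorGraph R).Adj a b ↔
    (a : R) ≠ b ∧ {r : R | r * a = 0} ∩ {r : R | r * b = 0} = {0} :=
  Iff.rfl

theorem adj_of_forall {a b : {a : R // a ≠ 0 ∧ ¬IsUnit a}} (hab : (a : R) ≠ b)
    (h : ∀ r : R, r * a = 0 → r * b = 0 → r = 0) : (zeroAnnihilatorGraph R).Adj a b :=
  adj_iff.mpr ⟨hab, Set.eq_singleton_iff_unique_mem.mpr ⟨by simp, fun r hr => h r hr.1 hr.2⟩⟩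

end zeroAnnihilatorGraph

section PrincipalMaximal

variable {R : Type*} [CommRing R] {m : Ideal R} {t : R}

theorem mem_jacobson_bot_of_mul_eq_zero (hm : m.IsMaximal) (ht : m = Ideal.span {t})
    {z v : R} (hzt : z * t = 0) (hzv : z * v = 0) (hv : v ∉ m) :
    z ∈ Ideal.jacobson (⊥ : Ideal R) := by
  refine Ideal.mem_sInf.mpr fun J ⟨_, hJ⟩ => ?_
  by_cases htJ : t ∈ J
  · have hmJ : m = J := hm.eq_of_le hJ.ne_top (ht ▸ (Ideal.span_singleton_le_iff_mem J).mpr htJ)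
    subst hmJ
    exact (hm.isPrime.mem_or_mem (hzv ▸ m.zero_mem)).resolve_right hv
  · exact (hJ.isPrime.mem_or_mem (hzt ▸ J.zero_mem)).resolve_right htJ

theorem generator_ne_zero (hm : m.IsMaximal) (ht : m = Ideal.span {t})
    {v : R} (hv0 : v ≠ 0) (hvu : ¬IsUnit v) : t ≠ 0 := by
  rintro rfl
  obtain ⟨w, i, hi, hwi⟩ := hm.exists_inv (x := v) (by simpa [ht] using hv0)
  rw [ht, Ideal.span_singleton_eq_bot.mpr rfl, Ideal.mem_bot] at hi
  exact hvu (IsUnit.of_mul_eq_one_right w (by rw [← hwi, hi, add_zero]))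

theorem exists_mul_add_one_not_isUnit (hjac : Ideal.jacobson (⊥ : Ideal R) = ⊥) {v : R}
    (hv0 : v ≠ 0) : ∃ s : R, ¬IsUnit (v * s + 1) := by
  by_contra! h
  exact hv0 (by simpa [hjac] using Ideal.mem_jacobson_bot.mpr h)

end PrincipalMaximal

namespace zeroAnnihilatorGraph

variable {R : Type*} [CommRing R] {m : Ideal R} {t : R}

local notation "V" => {a : R // a ≠ 0 ∧ ¬IsUnit a}

theorem adj_of_notMem (hjac : Ideal.jacobson (⊥ : Ideal R) = ⊥) (hm : m.IsMaximal)
    (ht : m = Ideal.span {t}) {v t' : V} (ht' : (t' : R) = t) (hv : (v : R) ∉ m) :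
    (zeroAnnihilatorGraph R).Adj v t' := by
  have htm : t ∈ m := ht ▸ Ideal.mem_span_singleton_self t
  refine adj_of_forall (ne_of_mem_of_not_mem (ht' ▸ htm) hv).symm fun z hzv hzt => ?_
  rw [ht'] at hzt
  simpa [hjac] using mem_jacobson_bot_of_mul_eq_zero hm ht hzt hzv hv

theorem exists_adj_notMem (hjac : Ideal.jacobson (⊥ : Ideal R) = ⊥) (hm : m.IsMaximal)
    (v : V) (hv : (v : R) ∈ m) : ∃ c : V, (c : R) ∉ m ∧ (zeroAnnihilatorGraph R).Adj v c := by
  obtain ⟨s, hs⟩ := exists_mul_add_one_not_isUnit hjac v.2.1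
  have hc0 : (v : R) * s + 1 ≠ 0 := fun h =>
    v.2.2 (IsUnit.of_mul_eq_one (-s) (by linear_combination -h))
  have hcm : (v : R) * s + 1 ∉ m := fun h =>
    hm.ne_top ((Ideal.eq_top_iff_one m).mpr (by simpa using m.sub_mem h (m.mul_mem_right s hv)))
  refine ⟨⟨_, hc0, hs⟩, hcm, adj_of_forall (ne_of_mem_of_not_mem hv hcm) fun r hrv hrc => ?_⟩
  linear_combination hrc - s * hrv

theorem exists_walk_to_generator_length_le_two (hjac : Ideal.jacobson (⊥ : Ideal R) = ⊥)
    (hm : m.IsMaximal) (ht : m = Ideal.span {t}) (v t' : V) (ht' : (t' : R) = t) :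
    ∃ w : (zeroAnnihilatorGraph R).Walk v t', w.length ≤ 2 := by
  by_cases hv : (v : R) ∈ m
  · obtain ⟨c, hcm, hvc⟩ := exists_adj_notMem hjac hm v hv
    exact ⟨.cons hvc (.cons (adj_of_notMem hjac hm ht ht' hcm) .nil), by simp⟩
  · exact ⟨.cons (adj_of_notMem hjac hm ht ht' hv) .nil, by simp⟩

theorem exists_walk_length_le_four (hjac : Ideal.jacobson (⊥ : Ideal R) = ⊥)
    (hm : m.IsMaximal) (ht : m = Ideal.span {t}) (u v : V) :
    ∃ w : (zeroAnnihilatorGraph R).Walk u v, w.length ≤ 4 := by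
  have htu : ¬IsUnit t := fun h => hm.ne_top (ht ▸ Ideal.span_singleton_eq_top.mpr h)
  let t' : V := ⟨t, generator_ne_zero hm ht u.2.1 u.2.2, htu⟩
  obtain ⟨wu, hwu⟩ := exists_walk_to_generator_length_le_two hjac hm ht u t' rfl
  obtain ⟨wv, hwv⟩ := exists_walk_to_generator_length_le_two hjac hm ht v t' rfl
  exact ⟨wu.append wv.reverse, by simp only [Walk.length_append, Walk.length_reverse]; omega⟩

end zeroAnnihilatorGraph

theorem stmt9_general {R : Type*} [CommRing R]
    (hjac : Ideal.jacobson (⊥ : Ideal R) = ⊥)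
    (m : Ideal R) (hm : m.IsMaximal) (t : R) (ht : m = Ideal.span {t})
    (x y : R) (hx0 : x ≠ 0) (hxu : ¬ IsUnit x) (hy0 : y ≠ 0) (hyu : ¬ IsUnit y) :
    ∃ p : List R,
      p.Chain' (fun a b => a ≠ b ∧ {r : R | r * a = 0} ∩ {r : R | r * b = 0} = {0}) ∧
      (∀ a ∈ p, a ≠ 0 ∧ ¬ IsUnit a) ∧
      p.head? = some x ∧ p.getLast? = some y ∧ p.length ≤ 5 := by
  obtain ⟨w, hw⟩ := zeroAnnihilatorGraph.exists_walk_length_le_four hjac hm ht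
    ⟨x, hx0, hxu⟩ ⟨y, hy0, hyu⟩
  refine ⟨w.support.map Subtype.val, (List.isChain_map Subtype.val).2 w.isChain_adj_support,
    ?_, ?_, ?_, ?_⟩
  · simp only [List.mem_map]
    rintro _ ⟨a, -, rfl⟩
    exact a.2
  · rw [List.head?_map, List.head?_eq_some_head w.support_ne_nil, Walk.head_support]; rfl
  · rw [List.getLast?_map, List.getLast?_eq_some_getLast w.support_ne_nil, Walk.getLast_support]
    rfl
  · simp only [List.length_map, Walk.length_support]; omega

theorem stmt9 {R : Type*} [CommRing R] [Nontrivial R]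
    (hjac : Ideal.jacobson (⊥ : Ideal R) = ⊥)
    (m : Ideal R) (hm : m.IsMaximal) (t : R) (ht : m = Ideal.span {t})
    (x y : R) (hx0 : x ≠ 0) (hxu : ¬ IsUnit x) (hy0 : y ≠ 0) (hyu : ¬ IsUnit y)
    (hxy : x ≠ y) :
    ∃ p : List R,
      p.Chain' (fun a b => a ≠ b ∧ {r : R | r * a = 0} ∩ {r : R | r * b = 0} = {0}) ∧
      (∀ a ∈ p, a ≠ 0 ∧ ¬ IsUnit a) ∧
      p.head? = some x ∧ p.getLast? = some y ∧ p.length ≤ 5 :=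
  stmt9_general hjac m hm t ht x y hx0 hxu hy0 hyu
end

section
/- Let R be a Bézout commutative ring such that every nonzero nonunit x satisfies Ann_R(x) ≠ {0} and such that Jac(R) ≠ {0}. If x is a nonzero element of Jac(R) and y is any nonzero nonunit element of R distinct from x, then x and y are not adjacent in ZA(R) (i.e., Ann_R(x) ∩ Ann_R(y) ≠ {0}). -/
theorem stmt10 {R : Type*} [CommRing R] [IsBezout R]
    (h1 : ∀ x : R, x ≠ 0 → ¬ IsUnit x → {r : R | r * x = 0} ≠ {0})
    (h2 : Ideal.jacobson (⊥ : Ideal R) ≠ ⊥)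
    (x y : R) (hx : x ∈ Ideal.jacobson (⊥ : Ideal R)) (hx0 : x ≠ 0)
    (hy0 : y ≠ 0) (hyu : ¬ IsUnit y) (hxy : x ≠ y) :
    {r : R | r * x = 0} ∩ {r : R | r * y = 0} ≠ {0} := by
  obtain ⟨g, hg⟩ := IsBezout.iff_span_pair_isPrincipal.mp inferInstance x y
  have hxg : x ∈ Submodule.span R ({g} : Set R) := hg ▸ Ideal.subset_span (by simp)
  have hyg : y ∈ Submodule.span R ({g} : Set R) := hg ▸ Ideal.subset_span (by simp)
  obtain ⟨a, ha⟩ := Submodule.mem_span_singleton.mp hxg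
  obtain ⟨b, hb⟩ := Submodule.mem_span_singleton.mp hyg
  have hg0 : g ≠ 0 := by rintro rfl; exact hy0 (by rw [← hb]; simp)
  have hgu : ¬ IsUnit g := by
    intro hu
    obtain ⟨c, hc⟩ := isUnit_iff_exists_inv.mp hu
    have h1mem : (1 : R) ∈ Ideal.span ({x, y} : Set R) := by
      rw [hg]; exact Submodule.mem_span_singleton.mpr ⟨c, by rw [smul_eq_mul, mul_comm]; exact hc⟩
    obtain ⟨p, q, hpq⟩ := Ideal.mem_span_pair.mp h1mem
    have hux : IsUnit (q * y) := by
      have : q * y = x * (-p) + 1 := by rw [← hpq]; ring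
      rw [this]
      exact Ideal.mem_jacobson_bot.mp hx (-p)
    exact hyu (isUnit_of_mul_isUnit_right hux)
  intro hcontra
  apply h1 g hg0 hgu
  ext r
  simp only [Set.mem_setOf_eq, Set.mem_singleton_iff]
  constructor
  · intro hr
    have : r ∈ ({r : R | r * x = 0} ∩ {r : R | r * y = 0}) := by
      constructor
      · show r * x = 0; rw [← ha, smul_eq_mul, ← mul_assoc, mul_comm r a, mul_assoc, hr, mul_zero]
      · show r * y = 0; rw [← hb, smul_eq_mul, ← mul_assoc, mul_comm r b, mul_assoc, hr, mul_zero]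
    rwa [hcontra] at this
  · rintro rfl; exact zero_mul g
end

section
/- Let R be a Bézout commutative ring with every nonzero nonunit having nonzero annihilator. If ZA(R) is connected (and has at least two vertices), then Jac(R) = {0}, or else R has exactly one nonzero nonunit element x and Jac(R) = {0, x}. -/
theorem stmt11 {R : Type*} [CommRing R] [IsBezout R]
    (hann : ∀ x : R, x ≠ 0 → ¬ IsUnit x → {r : R | r * x = 0} ≠ {0})
    (htwo : ∃ x y : R, x ≠ 0 ∧ ¬ IsUnit x ∧ y ≠ 0 ∧ ¬ IsUnit y ∧ x ≠ y)
    (hconn : ∀ x y : R, x ≠ 0 → ¬ IsUnit x → y ≠ 0 → ¬ IsUnit y → x ≠ y →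
      ∃ p : List R,
        p.Chain' (fun a b => a ≠ b ∧ {r : R | r * a = 0} ∩ {r : R | r * b = 0} = {0}) ∧
        (∀ a ∈ p, a ≠ 0 ∧ ¬ IsUnit a) ∧
        p.head? = some x ∧ p.getLast? = some y) :
    Ideal.jacobson (⊥ : Ideal R) = ⊥ ∨
    ∃ x : R, x ≠ 0 ∧ ¬ IsUnit x ∧ (∀ y : R, y ≠ 0 → ¬ IsUnit y → y = x) ∧
      (Ideal.jacobson (⊥ : Ideal R) : Set R) = {0, x} := by
  left
  refine eq_bot_iff.mpr fun j hj => ?_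
  rw [Ideal.mem_bot]
  by_contra hj0
  rw [Ideal.mem_jacobson_bot] at hj
  -- j is not a unit
  have hju : ¬ IsUnit j := by
    rintro ⟨u, rfl⟩
    have h0 := hj (-(u⁻¹ : Rˣ))
    have : (u : R) * (-(u⁻¹ : Rˣ)) + 1 = 0 := by
      rw [mul_neg, Units.mul_inv]; ring
    rw [this, isUnit_zero_iff] at h0
    exact hj0 (by rw [← mul_one (u : R), ← h0, mul_zero])
  obtain ⟨x, y, hx0, hxu, hy0, hyu, hxy⟩ := htwo
  obtain ⟨w, hw0, hwu, hjw⟩ : ∃ w : R, w ≠ 0 ∧ ¬IsUnit w ∧ j ≠ w := by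
    by_cases h : j = x
    · exact ⟨y, hy0, hyu, h ▸ hxy⟩
    · exact ⟨x, hx0, hxu, h⟩
  obtain ⟨p, hchain, hmem, hhead, hlast⟩ := hconn j w hj0 hju hw0 hwu hjw
  rcases p with _ | ⟨a, _ | ⟨b, l⟩⟩
  · simp at hhead
  · simp only [List.head?_cons, List.getLast?_singleton, Option.some.injEq] at hhead hlast
    exact hjw (hhead ▸ hlast ▸ rfl)
  · simp only [List.head?_cons, Option.some.injEq] at hhead
    subst hhead
    obtain ⟨⟨hab, hAnn⟩, -⟩ := List.isChain_cons_cons.mp hchain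
    obtain ⟨-, hbu⟩ := hmem b (by simp)
    -- Bezout: span {a, b} is principal
    obtain ⟨d, hd⟩ := (inferInstance : (Ideal.span {a, b}).IsPrincipal)
    have hjd : a ∈ Ideal.span {d} := by rw [show Ideal.span {d} = Ideal.span {a, b} from hd.symm]; exact Ideal.subset_span (by simp)
    have hbd : b ∈ Ideal.span {d} := by rw [show Ideal.span {d} = Ideal.span {a, b} from hd.symm]; exact Ideal.subset_span (by simp)
    obtain ⟨c, hc⟩ := Ideal.mem_span_singleton'.mp hjd
    obtain ⟨e, he⟩ := Ideal.mem_span_singleton'.mp hbd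
    have hsub : ∀ r : R, r * d = 0 → r = 0 := by
      intro r hr
      have h1 : r * a = 0 := by
        rw [← hc, show r * (c * d) = c * (r * d) by ring, hr, mul_zero]
      have h2 : r * b = 0 := by
        rw [← he, show r * (e * d) = e * (r * d) by ring, hr, mul_zero]
      have : r ∈ ({0} : Set R) := hAnn ▸ Set.mem_inter h1 h2
      simpa using this
    have hd0 : d ≠ 0 := fun h => hj0 (by rw [← hc, h, mul_zero])
    have hdu : IsUnit d := by
      by_contra hdu
      exact hann d hd0 hdu
        (Set.eq_singleton_iff_unique_mem.mpr ⟨by simp, fun r hr => hsub r hr⟩)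
    have htop : Ideal.span ({a, b} : Set R) = ⊤ := by
      rw [hd]; exact Ideal.span_singleton_eq_top.mpr hdu
    have h1mem : (1 : R) ∈ Ideal.span ({a, b} : Set R) := htop ▸ trivial
    obtain ⟨s, t, hst⟩ := Ideal.mem_span_pair.mp h1mem
    have hu := hj (-s)
    have heq : a * (-s) + 1 = t * b := by linear_combination -hst
    rw [heq] at hu
    exact hbu (isUnit_of_mul_isUnit_right hu)
end

section
/- Let R = F₁ × F₂ × ⋯ × Fₙ with n ≥ 3 and each Fᵢ a field. Then ZA(R) is connected with diameter exactly 3: any two distinct vertices are joined by a path of length at most 3, and the vertices (0,1,0,…,0) and (1,0,…,0) are at distance exactly 3. -/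
/-!
The vertices of `ZA(∏ Fᵢ)` are the tuples with both a zero and a nonzero coordinate, and two
of them are adjacent iff their zero sets are disjoint. The zero-set indicator `1_{z = 0}` of
`z` is adjacent to every vertex whose zero set lies in that of `z`. So two vertices `x`, `y`
whose supports meet are joined through `1_{xy = 0}`, and otherwise through `1_{x = 0}` and
`1_{y = 0}`. Conversely, a common neighbour `t` of `x` and `y` forces `x` and `y` to be nonzero
wherever `t` vanishes, so `e₁` and `e₀`, which have disjoint supports and a common zero (this
is where `n ≥ 3` enters), are at distance `3`.
-/

section AnnihilatorAdj

variable {R : Type*} [MulZeroClass R]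

def AnnihilatorAdj (a b : R) : Prop :=
  a ≠ b ∧ {r : R | r * a = 0} ∩ {r : R | r * b = 0} = {0}

theorem AnnihilatorAdj.symm {a b : R} (h : AnnihilatorAdj a b) : AnnihilatorAdj b a :=
  ⟨h.1.symm, Set.inter_comm _ _ ▸ h.2⟩

end AnnihilatorAdj

theorem List.eq_or_rel_or_exists_of_isChain_of_length_le_three {α : Type*} {r : α → α → Prop}
    {p : List α} {x y : α} (hp : p.IsChain r) (hx : p.head? = some x) (hy : p.getLast? = some y)
    (hlen : p.length ≤ 3) : x = y ∨ r x y ∨ ∃ t ∈ p, r x t ∧ r t y := by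
  rcases p with _ | ⟨a, _ | ⟨b, _ | ⟨c, _ | ⟨d, p⟩⟩⟩⟩
  · simp at hx
  · simp_all
  · simp_all
  · simp_all
  · simp only [List.length_cons] at hlen; omega

namespace Pi

variable {ι : Type*} {R : ι → Type*}

section MonoidWithZero

variable [∀ i, MonoidWithZero (R i)]

open Classical in
noncomputable def zeroSetIndicator (z : Π i, R i) : Π i, R i :=
  fun i => if z i = 0 then 1 else 0

variable [∀ i, Nontrivial (R i)]

theorem zeroSetIndicator_ne_zero_iff (z : Π i, R i) (i : ι) :
    zeroSetIndicator z i ≠ 0 ↔ z i = 0 := by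
  by_cases h : z i = 0 <;> simp [zeroSetIndicator, h]

theorem exists_zeroSetIndicator_apply {z : Π i, R i} (hz : ∃ i, z i ≠ 0) (hz' : ∃ i, z i = 0) :
    (∃ i, zeroSetIndicator z i ≠ 0) ∧ ∃ i, zeroSetIndicator z i = 0 := by
  simp_rw [← not_ne_iff (b := (0 : R _)), zeroSetIndicator_ne_zero_iff]
  exact ⟨hz', hz⟩

variable [∀ i, NoZeroDivisors (R i)]

theorem annihilator_inter_eq_zero_iff (a b : Π i, R i) :
    {r : Π i, R i | r * a = 0} ∩ {r | r * b = 0} = {0} ↔ ∀ i, a i ≠ 0 ∨ b i ≠ 0 := by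
  classical
  constructor
  · intro h i
    by_contra! hab
    have hmem : Pi.single i 1 ∈ {r : Π i, R i | r * a = 0} ∩ {r | r * b = 0} := by
      simp only [Set.mem_inter_iff, Set.mem_ofPred_eq, ← Pi.single_mul_left, hab.1, hab.2,
        mul_zero, Pi.single_zero, and_self]
    rw [h] at hmem
    exact one_ne_zero (congrFun hmem i ▸ (Pi.single_eq_same i 1).symm)
  · intro h
    refine Set.eq_singleton_iff_unique_mem.2 ⟨by simp, fun r ⟨hra, hrb⟩ => funext fun i => ?_⟩
    have hra := congrFun hra i
    have hrb := congrFun hrb i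
    simp only [Pi.mul_apply, Pi.zero_apply, mul_eq_zero] at hra hrb ⊢
    exact (h i).elim hra.resolve_right hrb.resolve_right

theorem annihilatorAdj_iff {a b : Π i, R i} :
    AnnihilatorAdj a b ↔ a ≠ b ∧ ∀ i, a i ≠ 0 ∨ b i ≠ 0 := by
  rw [AnnihilatorAdj, annihilator_inter_eq_zero_iff]

theorem annihilatorAdj_of_apply_eq_zero {a b : Π i, R i} {i : ι} (hi : a i = 0)
    (h : ∀ j, a j ≠ 0 ∨ b j ≠ 0) : AnnihilatorAdj a b :=
  annihilatorAdj_iff.2 ⟨fun hab => (h i).elim (· hi) (· (hab ▸ hi)), h⟩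

theorem apply_ne_zero_of_annihilatorAdj {x t y : Π i, R i}
    (hxt : AnnihilatorAdj x t) (hty : AnnihilatorAdj t y) {i : ι} (ht : t i = 0) :
    x i ≠ 0 ∧ y i ≠ 0 :=
  ⟨((annihilatorAdj_iff.1 hxt).2 i).resolve_right (· ht),
    ((annihilatorAdj_iff.1 hty).2 i).resolve_left (· ht)⟩

theorem annihilatorAdj_zeroSetIndicator {x z : Π i, R i} {i : ι} (hi : x i = 0)
    (h : ∀ j, x j = 0 → z j = 0) : AnnihilatorAdj x (zeroSetIndicator z) := by
  refine annihilatorAdj_of_apply_eq_zero hi fun j => ?_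
  rw [zeroSetIndicator_ne_zero_iff]
  exact (em (x j = 0)).elim (Or.inr ∘ h j) Or.inl

theorem exists_isChain_annihilatorAdj {x y : Π i, R i} (hx : ∃ i, x i ≠ 0)
    (hx' : ∃ i, x i = 0) (hy : ∃ i, y i ≠ 0) (hy' : ∃ i, y i = 0) :
    ∃ p : List (Π i, R i), p.IsChain AnnihilatorAdj ∧
      (∀ a ∈ p, (∃ i, a i ≠ 0) ∧ ∃ i, a i = 0) ∧
      p.head? = some x ∧ p.getLast? = some y ∧ p.length ≤ 4 := by
  obtain ⟨i, hi⟩ := hx'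
  obtain ⟨j, hj⟩ := hy'
  by_cases hsupp : ∃ k, x k ≠ 0 ∧ y k ≠ 0
  · obtain ⟨k, hxk, hyk⟩ := hsupp
    have hxy : (∃ k, (x * y) k ≠ 0) ∧ ∃ k, (x * y) k = 0 :=
      ⟨⟨k, mul_ne_zero hxk hyk⟩, ⟨i, by simp [hi]⟩⟩
    refine ⟨[x, zeroSetIndicator (x * y), y], ?_, ?_, rfl, rfl, by simp⟩
    · simp only [List.isChain_cons_cons, List.isChain_singleton, and_true]
      exact ⟨annihilatorAdj_zeroSetIndicator hi fun l hl => by simp [hl],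
        (annihilatorAdj_zeroSetIndicator hj fun l hl => by simp [hl]).symm⟩
    · simp only [List.mem_cons, List.not_mem_nil, or_false, forall_eq_or_imp, forall_eq]
      exact ⟨⟨hx, i, hi⟩, exists_zeroSetIndicator_apply hxy.1 hxy.2, hy, j, hj⟩
  · push Not at hsupp
    have hxy := exists_zeroSetIndicator_apply hx ⟨i, hi⟩
    obtain ⟨k, hk⟩ := hxy.2
    refine ⟨[x, zeroSetIndicator x, zeroSetIndicator y, y], ?_, ?_, rfl, rfl, by simp⟩
    · simp only [List.isChain_cons_cons, List.isChain_singleton, and_true]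
      refine ⟨annihilatorAdj_zeroSetIndicator hi fun _ => id,
        annihilatorAdj_of_apply_eq_zero hk fun l => ?_,
        (annihilatorAdj_zeroSetIndicator hj fun _ => id).symm⟩
      simp only [zeroSetIndicator_ne_zero_iff]
      exact (em (x l = 0)).elim Or.inl (Or.inr ∘ hsupp l)
    · simp only [List.mem_cons, List.not_mem_nil, or_false, forall_eq_or_imp, forall_eq]
      exact ⟨⟨hx, i, hi⟩, hxy, exists_zeroSetIndicator_apply hy ⟨j, hj⟩, hy, j, hj⟩

theorem not_exists_isChain_annihilatorAdj_of_length_le_three {x y : Π i, R i} (hxy : x ≠ y)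
    (hsupp : ∀ i, x i = 0 ∨ y i = 0) {k : ι} (hxk : x k = 0) (hyk : y k = 0) :
    ¬∃ p : List (Π i, R i), p.IsChain AnnihilatorAdj ∧ (∀ a ∈ p, ∃ i, a i = 0) ∧
      p.head? = some x ∧ p.getLast? = some y ∧ p.length ≤ 3 := by
  rintro ⟨p, hp, hzero, hx, hy, hlen⟩
  rcases List.eq_or_rel_or_exists_of_isChain_of_length_le_three hp hx hy hlen with
    h | h | ⟨t, htp, hxt, hty⟩
  · exact hxy h
  · exact ((annihilatorAdj_iff.1 h).2 k).elim (· hxk) (· hyk)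
  · obtain ⟨i, hti⟩ := hzero t htp
    obtain ⟨hxi, hyi⟩ := apply_ne_zero_of_annihilatorAdj hxt hty hti
    exact (hsupp i).elim hxi hyi

end MonoidWithZero

theorem ne_zero_and_not_isUnit_iff [∀ i, GroupWithZero (R i)] (a : Π i, R i) :
    a ≠ 0 ∧ ¬IsUnit a ↔ (∃ i, a i ≠ 0) ∧ ∃ i, a i = 0 := by
  simp [Function.ne_iff, Pi.isUnit_iff, isUnit_iff_ne_zero]

end Pi

theorem stmt12 {n : ℕ} (hn : 3 ≤ n) (F : Fin n → Type*) [∀ i, Field (F i)]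
    (u v : Π i, F i)
    (hu : u = fun i => if i = (⟨1, by omega⟩ : Fin n) then 1 else 0)
    (hv : v = fun i => if i = (⟨0, by omega⟩ : Fin n) then 1 else 0) :
    (∀ x y : Π i, F i, x ≠ 0 → ¬ IsUnit x → y ≠ 0 → ¬ IsUnit y → x ≠ y →
      ∃ p : List (Π i, F i),
        p.Chain' (fun a b => a ≠ b ∧
          {r : Π i, F i | r * a = 0} ∩ {r : Π i, F i | r * b = 0} = {0}) ∧
        (∀ a ∈ p, a ≠ 0 ∧ ¬ IsUnit a) ∧
        p.head? = some x ∧ p.getLast? = some y ∧ p.length ≤ 4) ∧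
    ¬ ∃ p : List (Π i, F i),
        p.Chain' (fun a b => a ≠ b ∧
          {r : Π i, F i | r * a = 0} ∩ {r : Π i, F i | r * b = 0} = {0}) ∧
        (∀ a ∈ p, a ≠ 0 ∧ ¬ IsUnit a) ∧
        p.head? = some u ∧ p.getLast? = some v ∧ p.length ≤ 3 := by
  refine ⟨fun x y hx hx' hy hy' _ => ?_, ?_⟩
  · obtain ⟨hx, hx'⟩ := (Pi.ne_zero_and_not_isUnit_iff x).1 ⟨hx, hx'⟩
    obtain ⟨hy, hy'⟩ := (Pi.ne_zero_and_not_isUnit_iff y).1 ⟨hy, hy'⟩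
    obtain ⟨p, hp, hvert, hpx, hpy, hlen⟩ := Pi.exists_isChain_annihilatorAdj hx hx' hy hy'
    exact ⟨p, hp, fun a ha => (Pi.ne_zero_and_not_isUnit_iff a).2 (hvert a ha), hpx, hpy, hlen⟩
  · rintro ⟨p, hp, hvert, hpu, hpv, hlen⟩
    have huv : u ≠ v := fun huv => by
      have := congrFun huv ⟨1, by omega⟩
      simp [hu, hv] at this
    have hsupp (i : Fin n) : u i = 0 ∨ v i = 0 := by
      subst hu hv
      by_cases h : i = ⟨1, by omega⟩ <;> simp [h, Fin.ext_iff]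
    have hvert' (a) (ha : a ∈ p) : ∃ i, a i = 0 :=
      ((Pi.ne_zero_and_not_isUnit_iff a).1 (hvert a ha)).2
    exact Pi.not_exists_isChain_annihilatorAdj_of_length_le_three huv hsupp (k := ⟨2, by omega⟩)
      (by simp [hu]) (by simp [hv]) ⟨p, hp, hvert', hpu, hpv, hlen⟩
end

section
/- If R is a commutative ring such that ZA(R) is a star graph, then R has at most two maximal ideals. -/
/-! Comaximal proper ideals `I`, `J` split `1 = (1 - u) + u` with `1 - u ∈ I` and `u ∈ J`;
then `u` and `1 - u` are distinct nonzero nonunits whose annihilators meet only in `0`, so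
they are adjacent in `ZA(R)` and the centre `c` is one of them. Hence `c` lies in exactly one
of any two distinct maximal ideals, which is impossible for three pairwise distinct ones. -/

theorem inter_annihilators_one_sub_eq_zero {R : Type*} [CommRing R] (u : R) :
    {r : R | r * u = 0} ∩ {r : R | r * (1 - u) = 0} = {0} := by
  ext r
  simp only [Set.mem_inter_iff, Set.mem_ofPred_eq, Set.mem_singleton_iff]
  constructor
  · rintro ⟨hu, h1u⟩
    linear_combination hu + h1u
  · rintro rfl
    simp

namespace Ideal

variable {R : Type*} [CommRing R]

theorem one_sub_notMem_of_mem {I : Ideal R} (hI : I ≠ ⊤) {x : R} (hx : x ∈ I) : 1 - x ∉ I :=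
  fun h1x => hI <| I.eq_top_iff_one.2 <| by simpa using I.add_mem hx h1x

section StarCentre

variable (c : R)
  (hedge : ∀ x y : R, x ≠ 0 → ¬ IsUnit x → y ≠ 0 → ¬ IsUnit y → x ≠ y →
    {r : R | r * x = 0} ∩ {r : R | r * y = 0} = {0} → x = c ∨ y = c)
include hedge

theorem eq_or_one_sub_eq_of_mem {I J : Ideal R} (hI : I ≠ ⊤) (hJ : J ≠ ⊤) {u : R}
    (huJ : u ∈ J) (huI : 1 - u ∈ I) : u = c ∨ 1 - u = c := by
  have hu : ¬ IsUnit u := fun h => hJ (J.eq_top_of_isUnit_mem huJ h)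
  have h1u : ¬ IsUnit (1 - u) := fun h => hI (I.eq_top_of_isUnit_mem huI h)
  have hu0 : u ≠ 0 := by rintro rfl; simp at h1u
  have h1u0 : 1 - u ≠ 0 := fun h => hu (sub_eq_zero.mp h ▸ isUnit_one)
  have hne : u ≠ 1 - u := fun h => one_sub_notMem_of_mem hI (by rwa [h]) huI
  exact hedge u (1 - u) hu0 hu h1u0 h1u hne (inter_annihilators_one_sub_eq_zero u)

theorem mem_iff_notMem_of_sup_eq_top {I J : Ideal R} (hI : I ≠ ⊤) (hJ : J ≠ ⊤)
    (hIJ : I ⊔ J = ⊤) : c ∈ I ↔ c ∉ J := by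
  have h1 : (1 : R) ∈ I ⊔ J := hIJ ▸ Submodule.mem_top
  obtain ⟨i, hi, u, hu, hiu⟩ := Submodule.mem_sup.mp h1
  have huI : 1 - u ∈ I := by rwa [← hiu, add_sub_cancel_right]
  rcases eq_or_one_sub_eq_of_mem c hedge hI hJ hu huI with rfl | rfl
  · exact iff_of_false (fun hcI => one_sub_notMem_of_mem hI hcI huI) (not_not.mpr hu)
  · exact iff_of_true huI fun hcJ => one_sub_notMem_of_mem hJ hu hcJ

end StarCentre

end Ideal

theorem stmt14_general {R : Type*} [CommRing R] (c : R)
    (hstar : ∀ x y : R, x ≠ 0 → ¬ IsUnit x → y ≠ 0 → ¬ IsUnit y → x ≠ y →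
      ({r : R | r * x = 0} ∩ {r : R | r * y = 0} = {0} ↔ (x = c ∨ y = c))) :
    ∀ m₁ m₂ m₃ : Ideal R, m₁.IsMaximal → m₂.IsMaximal → m₃.IsMaximal →
      m₁ = m₂ ∨ m₁ = m₃ ∨ m₂ = m₃ := by
  intro m₁ m₂ m₃ h₁ h₂ h₃
  by_contra! hne
  obtain ⟨h₁₂, h₁₃, h₂₃⟩ := hne
  have separate {m m' : Ideal R} (hm : m.IsMaximal) (hm' : m'.IsMaximal) (hmm' : m ≠ m') :
      c ∈ m ↔ c ∉ m' :=
    Ideal.mem_iff_notMem_of_sup_eq_top c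
      (fun x y hx hxu hy hyu hxy => (hstar x y hx hxu hy hyu hxy).mp)
      hm.ne_top hm'.ne_top (hm.coprime_of_ne hm' hmm')
  have := separate h₁ h₂ h₁₂
  have := separate h₁ h₃ h₁₃
  have := separate h₂ h₃ h₂₃
  tauto

theorem stmt14 {R : Type*} [CommRing R] (c : R) (hc0 : c ≠ 0) (hcu : ¬ IsUnit c)
    (hstar : ∀ x y : R, x ≠ 0 → ¬ IsUnit x → y ≠ 0 → ¬ IsUnit y → x ≠ y →
      ({r : R | r * x = 0} ∩ {r : R | r * y = 0} = {0} ↔ (x = c ∨ y = c))) :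
    ∀ m₁ m₂ m₃ : Ideal R, m₁.IsMaximal → m₂.IsMaximal → m₃.IsMaximal →
      m₁ = m₂ ∨ m₁ = m₃ ∨ m₂ = m₃ :=
  stmt14_general c hstar
end

section
/- Let F be a field and R = ℤ/2 × F. Then ZA(R) is a star graph with center (1,0): the vertex (1,0) is adjacent to every vertex (0,u) with u ∈ F nonzero, these are all the vertices, and no two vertices (0,u₁), (0,u₂) with u₁ ≠ u₂ are adjacent. -/
/-!
Everything is coordinatewise. A nonzero nonunit of a product of two fields has exactly one zero
coordinate, and in `ZMod 2` the nonzero coordinate is `1`. The annihilator of `(1, 0)` is `0 × F`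
and that of `(0, u)` is `ZMod 2 × 0`, so these meet only in `0`, while all the `(0, u)` share
the nonzero annihilating element `(1, 0)`.
-/

namespace Prod

variable {R S : Type*}

theorem mul_mk_one_zero_eq_zero_iff [MulZeroOneClass R] [MulZeroClass S] (r : R × S) :
    r * (1, 0) = 0 ↔ r.1 = 0 := by
  simp [Prod.ext_iff]

theorem mul_mk_zero_eq_zero_iff [MulZeroClass R] [MulZeroClass S] [NoZeroDivisors S]
    {u : S} (hu : u ≠ 0) (r : R × S) : r * (0, u) = 0 ↔ r.2 = 0 := by
  simp [Prod.ext_iff, hu]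

theorem mk_one_zero_mul_mk_zero [MulZeroOneClass R] [MulZeroClass S] (u : S) :
    ((1 : R), (0 : S)) * (0, u) = 0 := by
  simp [Prod.ext_iff]

theorem ne_zero_and_not_isUnit_iff [GroupWithZero R] [GroupWithZero S] (z : R × S) :
    z ≠ 0 ∧ ¬IsUnit z ↔ (z.1 ≠ 0 ∧ z.2 = 0) ∨ (z.1 = 0 ∧ z.2 ≠ 0) := by
  rw [Prod.isUnit_iff, isUnit_iff_ne_zero, isUnit_iff_ne_zero, Ne, Prod.ext_iff]
  simp only [fst_zero, snd_zero]
  tauto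

end Prod

theorem stmt15 {F : Type*} [Field F] :
    (((1 : ZMod 2), (0 : F)) ≠ 0 ∧ ¬ IsUnit ((1 : ZMod 2), (0 : F))) ∧
    (∀ z : ZMod 2 × F, z ≠ 0 → ¬ IsUnit z →
      z = ((1 : ZMod 2), (0 : F)) ∨ ∃ u : F, u ≠ 0 ∧ z = (0, u)) ∧
    (∀ u : F, u ≠ 0 →
      {r : ZMod 2 × F | r * ((1 : ZMod 2), (0 : F)) = 0} ∩
        {r : ZMod 2 × F | r * ((0 : ZMod 2), u) = 0} = {0}) ∧
    (∀ u₁ u₂ : F, u₁ ≠ 0 → u₂ ≠ 0 → u₁ ≠ u₂ →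
      {r : ZMod 2 × F | r * ((0 : ZMod 2), u₁) = 0} ∩
        {r : ZMod 2 × F | r * ((0 : ZMod 2), u₂) = 0} ≠ {0}) := by
  refine ⟨(Prod.ne_zero_and_not_isUnit_iff _).2 (.inl ⟨one_ne_zero, rfl⟩), ?_, ?_, ?_⟩
  · rintro ⟨a, b⟩ hz hu
    rcases (Prod.ne_zero_and_not_isUnit_iff _).1 ⟨hz, hu⟩ with ⟨ha, rfl⟩ | ⟨rfl, hb⟩
    · exact .inl (Prod.ext (isUnit_iff_eq_one.1 (isUnit_iff_ne_zero.2 ha)) rfl)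
    · exact .inr ⟨b, hb, rfl⟩
  · intro u hu
    ext r
    simp only [Set.mem_inter_iff, Set.mem_ofPred_eq, Prod.mul_mk_one_zero_eq_zero_iff,
      Prod.mul_mk_zero_eq_zero_iff hu, Set.mem_singleton_iff]
    exact (Prod.ext_iff (y := 0)).symm
  · intro u₁ u₂ _ _ _ h
    have hmem : ((1 : ZMod 2), (0 : F)) ∈ ({0} : Set (ZMod 2 × F)) :=
      h ▸ ⟨Prod.mk_one_zero_mul_mk_zero u₁, Prod.mk_one_zero_mul_mk_zero u₂⟩
    exact one_ne_zero (congrArg Prod.fst hmem)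
end

section
/- Let R be a commutative ring. If ZA(R) is a complete graph (every pair of distinct nonzero nonunit elements x, y satisfies Ann_R(x) ∩ Ann_R(y) = {0}), then the co-annihilating ideal graph A_R is complete: for every pair of distinct nonzero proper ideals I, J of R, Ann_R(I) ∩ Ann_R(J) = {0}. -/
theorem stmt16 {R : Type*} [CommRing R]
    (h : ∀ x y : R, x ≠ 0 → ¬ IsUnit x → y ≠ 0 → ¬ IsUnit y → x ≠ y →
      {r : R | r * x = 0} ∩ {r : R | r * y = 0} = {0}) :
    ∀ I J : Ideal R, I ≠ ⊥ → I ≠ ⊤ → J ≠ ⊥ → J ≠ ⊤ → I ≠ J →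
      {r : R | ∀ a ∈ I, r * a = 0} ∩ {r : R | ∀ a ∈ J, r * a = 0} = {0} := by
  intro I J hI0 hIT hJ0 hJT hIJ
  ext r
  simp only [Set.mem_inter_iff, Set.mem_setOf_eq, Set.mem_singleton_iff]
  constructor
  · rintro ⟨hrI, hrJ⟩
    obtain ⟨x, hxI, hx0⟩ := Submodule.exists_mem_ne_zero_of_ne_bot hI0
    obtain ⟨y, hyJ, hy0⟩ := Submodule.exists_mem_ne_zero_of_ne_bot hJ0
    have hxu : ¬ IsUnit x := fun hu => hIT (I.eq_top_of_isUnit_mem hxI hu)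
    have hyu : ¬ IsUnit y := fun hu => hJT (J.eq_top_of_isUnit_mem hyJ hu)
    by_cases hxy : x = y
    · subst hxy
      by_cases hle : I ≤ J
      · have hnle : ¬ J ≤ I := fun h' => hIJ (le_antisymm hle h')
        obtain ⟨z, hzJ, hzI⟩ := Set.not_subset.mp hnle
        have hz0 : z ≠ 0 := fun h' => hzI (h' ▸ I.zero_mem)
        have hzu : ¬ IsUnit z := fun hu => hJT (J.eq_top_of_isUnit_mem hzJ hu)
        have hzx : x ≠ z := fun h' => hzI (h' ▸ hxI)
        have := h x z hx0 hxu hz0 hzu hzx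
        have hr : r ∈ ({r : R | r * x = 0} ∩ {r : R | r * z = 0}) :=
          ⟨hrI x hxI, hrJ z hzJ⟩
        rw [this] at hr
        exact hr
      · obtain ⟨z, hzI, hzJ⟩ := Set.not_subset.mp hle
        have hz0 : z ≠ 0 := fun h' => hzJ (h' ▸ J.zero_mem)
        have hzu : ¬ IsUnit z := fun hu => hIT (I.eq_top_of_isUnit_mem hzI hu)
        have hzx : z ≠ x := fun h' => hzJ (h' ▸ hyJ)
        have := h z x hz0 hzu hx0 hxu hzx
        have hr : r ∈ ({r : R | r * z = 0} ∩ {r : R | r * x = 0}) :=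
          ⟨hrI z hzI, hrJ x hyJ⟩
        rw [this] at hr
        exact hr
    · have := h x y hx0 hxu hy0 hyu hxy
      have hr : r ∈ ({r : R | r * x = 0} ∩ {r : R | r * y = 0}) :=
        ⟨hrI x hxI, hrJ y hyJ⟩
      rw [this] at hr
      exact hr
  · rintro rfl
    exact ⟨fun a _ => zero_mul a, fun a _ => zero_mul a⟩
end

section
/- Let R be a commutative ring. ZA(R) is a complete graph if and only if one of the following holds: (1) R has exactly one nonzero nonunit element; (2) R is an integral domain; (3) R ≅ ℤ/2 × ℤ/2. -/
lemma aux17 {R : Type*} [CommRing R] [Nontrivial R] (a b : R)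
    (ha0 : a ≠ 0) (hb0 : b ≠ 0) (hab : a * b = 0) (haa : a * a = a) (hbb : b * b = b)
    (hsum : a + b = 1) (h2a : a + a = 0) (h2b : b + b = 0)
    (huniv : ∀ r : R, r = 0 ∨ r = a ∨ r = b ∨ r = 1) :
    Nonempty (R ≃+* ZMod 2 × ZMod 2) := by
  have h2 : ∀ x : ZMod 2, x = 0 ∨ x = 1 := by decide
  have h01 : (0 : ZMod 2) ≠ 1 := by decide
  let f : ZMod 2 × ZMod 2 → R := fun p => (if p.1 = 1 then a else 0) + (if p.2 = 1 then b else 0)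
  have hmul : ∀ p q, f (p * q) = f p * f q := by
    rintro ⟨x, y⟩ ⟨z, w⟩
    rcases h2 x with rfl | rfl <;> rcases h2 y with rfl | rfl <;>
      rcases h2 z with rfl | rfl <;> rcases h2 w with rfl | rfl <;>
      simp only [f, Prod.mk_mul_mk, mul_zero, zero_mul, mul_one, one_mul,
        eq_self_iff_true, if_true, if_neg h01] <;>
      first
        | ring1
        | linear_combination -haa
        | linear_combination -hbb
        | linear_combination -hab
        | linear_combination -haa - hab
        | linear_combination -hbb - hab
        | linear_combination -haa - hbb - 2 * hab
  have hadd : ∀ p q, f (p + q) = f p + f q := by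
    rintro ⟨x, y⟩ ⟨z, w⟩
    rcases h2 x with rfl | rfl <;> rcases h2 y with rfl | rfl <;>
      rcases h2 z with rfl | rfl <;> rcases h2 w with rfl | rfl <;>
      simp only [f, Prod.mk_add_mk, add_zero, zero_add,
        eq_self_iff_true, if_true, if_neg h01, show (1:ZMod 2)+1 = 0 by decide] <;>
      first
        | ring1
        | linear_combination -h2a
        | linear_combination -h2b
        | linear_combination -h2a - h2b
  have hone : f 1 = 1 := by
    simp only [f, Prod.fst_one, Prod.snd_one, eq_self_iff_true, if_true]
    exact hsum
  have hzero : f 0 = 0 := by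
    simp only [f, Prod.fst_zero, Prod.snd_zero, if_neg h01, add_zero]
  let g : ZMod 2 × ZMod 2 →+* R :=
    { toFun := f, map_one' := hone, map_mul' := hmul, map_zero' := hzero, map_add' := hadd }
  have hg : ∀ p, g p = f p := fun _ => rfl
  have inj : Function.Injective g := by
    rw [injective_iff_map_eq_zero]
    rintro ⟨x, y⟩ hp
    rw [hg] at hp
    rcases h2 x with rfl | rfl <;> rcases h2 y with rfl | rfl <;>
      simp only [f, eq_self_iff_true, if_true, if_neg h01, add_zero, zero_add] at hp
    · rfl
    · exact absurd hp hb0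
    · exact absurd hp ha0
    · exact absurd (by linear_combination hp - hsum : (1:R) = 0) one_ne_zero
  have surj : Function.Surjective g := by
    intro r
    rcases huniv r with rfl | rfl | rfl | rfl
    · exact ⟨0, map_zero g⟩
    · exact ⟨(1, 0), by rw [hg]; simp only [f, eq_self_iff_true, if_true, if_neg h01, add_zero]⟩
    · exact ⟨(0, 1), by rw [hg]; simp only [f, eq_self_iff_true, if_true, if_neg h01, zero_add]⟩
    · exact ⟨1, map_one g⟩
  exact ⟨(RingEquiv.ofBijective g ⟨inj, surj⟩).symm⟩

theorem stmt17 {R : Type*} [CommRing R] [Nontrivial R] :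
    (∀ x y : R, x ≠ 0 → ¬ IsUnit x → y ≠ 0 → ¬ IsUnit y → x ≠ y →
      {r : R | r * x = 0} ∩ {r : R | r * y = 0} = {0}) ↔
    ((∃! x : R, x ≠ 0 ∧ ¬ IsUnit x) ∨ IsDomain R ∨
      Nonempty (R ≃+* ZMod 2 × ZMod 2)) := by
  constructor
  · intro H
    have H' : ∀ x y z : R, x ≠ 0 → ¬IsUnit x → y ≠ 0 → ¬IsUnit y → x ≠ y →
        z * x = 0 → z * y = 0 → z = 0 := by
      intro x y z h1 h2 h3 h4 h5 h6 h7
      have hs := H x y h1 h2 h3 h4 h5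
      have : z ∈ ({0} : Set R) := hs ▸ Set.mem_inter h6 h7
      exact this
    have nonunit : ∀ u v : R, u * v = 0 → v ≠ 0 → ¬IsUnit u := by
      intro u v huv hv hu
      obtain ⟨c, hc⟩ := isUnit_iff_exists_inv.mp hu
      exact hv (by linear_combination c * huv - v * hc)
    by_cases hdom : ∀ x y : R, x * y = 0 → x = 0 ∨ y = 0
    · haveI : NoZeroDivisors R := ⟨fun {x y} h => hdom x y h⟩
      exact Or.inr (Or.inl (NoZeroDivisors.to_isDomain R))
    push_neg at hdom
    obtain ⟨a, b, hab, ha0, hb0⟩ := hdom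
    have hau : ¬IsUnit a := nonunit a b hab hb0
    have hbu : ¬IsUnit b := nonunit b a (by linear_combination hab) ha0
    by_cases hsq : ∃ c : R, c ≠ 0 ∧ c * c = 0
    · -- unique nonzero nonunit
      obtain ⟨c, hc0, hcc⟩ := hsq
      have hcu : ¬IsUnit c := nonunit c c hcc hc0
      refine Or.inl ⟨c, ⟨hc0, hcu⟩, ?_⟩
      rintro y ⟨hy0, hyu⟩
      by_contra hne
      have hne' : c ≠ y := fun h => hne h.symm
      have h1 : c * y ≠ 0 := fun h => hc0 (H' c y c hc0 hcu hy0 hyu hne' hcc h)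
      have h2 : (c * y) * c = 0 := by linear_combination y * hcc
      have hzu : ¬IsUnit (c * y) := nonunit (c * y) c h2 hc0
      have hz : c * y = c := by
        by_contra h
        exact hc0 (H' (c * y) c c h1 hzu hc0 hcu h (by linear_combination y * hcc) hcc)
      have hy1ne : y - 1 ≠ 0 := by
        intro h
        exact hyu (by rw [show y = 1 by linear_combination h]; exact isUnit_one)
      have hy1c : c * (y - 1) = 0 := by linear_combination hz
      have hy1u : ¬IsUnit (y - 1) := nonunit (y - 1) c (by linear_combination hz) hc0
      have : y - 1 = c := by
        by_contra h
        exact hc0 (H' (y - 1) c c hy1ne hy1u hc0 hcu h (by linear_combination hz) hcc)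
      exact hyu (isUnit_iff_exists_inv.mpr ⟨1 - c, by linear_combination -hcc + (1 - c) * this⟩)
    · -- Z/2 × Z/2 case
      push_neg at hsq
      refine Or.inr (Or.inr ?_)
      have hne : a ≠ b := fun h => hsq a ha0 (by rw [h] at hab ⊢; exact hab)
      have haa : a * a = a := by
        by_contra h
        have h1 : a * a ≠ 0 := hsq a ha0
        have hnu : ¬IsUnit (a * a) := nonunit (a * a) b (by linear_combination a * hab) hb0
        exact hb0 (H' (a * a) a b h1 hnu ha0 hau h
          (by linear_combination a * hab) (by linear_combination hab))
      have hbb : b * b = b := by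
        by_contra h
        have h1 : b * b ≠ 0 := hsq b hb0
        have hnu : ¬IsUnit (b * b) := nonunit (b * b) a (by linear_combination b * hab) ha0
        exact ha0 (H' (b * b) b a h1 hnu hb0 hbu h
          (by linear_combination b * hab) hab)
      have hsum : a + b = 1 := by
        by_contra h
        have hc0 : 1 - a - b ≠ 0 := fun hc => h (by linear_combination -hc)
        have hca : (1 - a - b) * a = 0 := by linear_combination -haa - hab
        have hcu : ¬IsUnit (1 - a - b) := nonunit _ a hca ha0
        have hcna : 1 - a - b ≠ a := by
          intro hc
          rw [hc] at hca
          exact (hsq a ha0) hca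
        exact hb0 (H' (1 - a - b) a b hc0 hcu ha0 hau hcna
          (by linear_combination -hbb - hab) (by linear_combination hab))
      have hra : ∀ r : R, r * a = 0 ∨ r * a = a := by
        intro r
        by_contra h
        push_neg at h
        obtain ⟨h1, h2⟩ := h
        have hxu : ¬IsUnit (r * a) := nonunit _ b (by linear_combination r * hab) hb0
        exact hb0 (H' (r * a) a b h1 hxu ha0 hau h2
          (by linear_combination r * hab) (by linear_combination hab))
      have hrb : ∀ r : R, r * b = 0 ∨ r * b = b := by
        intro r
        by_contra h
        push_neg at h
        obtain ⟨h1, h2⟩ := h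
        have hxu : ¬IsUnit (r * b) := nonunit _ a (by linear_combination r * hab) ha0
        exact ha0 (H' (r * b) b a h1 hxu hb0 hbu h2
          (by linear_combination r * hab) hab)
      have h2a : a + a = 0 := by
        rcases hra (1 + 1) with h | h
        · linear_combination h
        · exact absurd (show a = 0 by linear_combination h) ha0
      have h2b : b + b = 0 := by
        rcases hrb (1 + 1) with h | h
        · linear_combination h
        · exact absurd (show b = 0 by linear_combination h) hb0
      have huniv : ∀ r : R, r = 0 ∨ r = a ∨ r = b ∨ r = 1 := by
        intro r
        rcases hra r with h | h <;> rcases hrb r with h' | h'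
        · exact Or.inl (by linear_combination -r * hsum + h + h')
        · exact Or.inr (Or.inr (Or.inl (by linear_combination -r * hsum + h + h')))
        · exact Or.inr (Or.inl (by linear_combination -r * hsum + h + h'))
        · exact Or.inr (Or.inr (Or.inr (by linear_combination -r * hsum + h + h' + hsum)))
      exact aux17 a b ha0 hb0 hab haa hbb hsum h2a h2b huniv
  · rintro (⟨x, ⟨hx0, hxu⟩, hx⟩ | hdom | he)
    · intro u v hu0 huu hv0 hvu huv
      exact absurd ((hx u ⟨hu0, huu⟩).trans (hx v ⟨hv0, hvu⟩).symm) huv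
    · intro x y hx0 _ hy0 _ _
      ext r
      simp only [Set.mem_inter_iff, Set.mem_setOf_eq, Set.mem_singleton_iff]
      constructor
      · rintro ⟨h1, -⟩
        rcases mul_eq_zero.mp h1 with h | h
        · exact h
        · exact absurd h hx0
      · rintro rfl
        exact ⟨zero_mul x, zero_mul y⟩
    · obtain ⟨e⟩ := he
      intro x y hx0 hxu hy0 hyu hxy
      have key : ∀ X Y Z : ZMod 2 × ZMod 2, (X ≠ 0 ∧ X ≠ 1 ∧ Y ≠ 0 ∧ Y ≠ 1 ∧ X ≠ Y ∧
          Z * X = 0 ∧ Z * Y = 0) → Z = 0 := by decide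
      have hex0 : e x ≠ 0 := fun h => hx0 (e.injective (by rw [h, map_zero]))
      have hey0 : e y ≠ 0 := fun h => hy0 (e.injective (by rw [h, map_zero]))
      have hex1 : e x ≠ 1 := fun h => hxu (by
        have : x = e.symm 1 := by rw [← h, RingEquiv.symm_apply_apply]
        rw [this, map_one]; exact isUnit_one)
      have hey1 : e y ≠ 1 := fun h => hyu (by
        have : y = e.symm 1 := by rw [← h, RingEquiv.symm_apply_apply]
        rw [this, map_one]; exact isUnit_one)
      have hexy : e x ≠ e y := fun h => hxy (e.injective h)
      ext r
      simp only [Set.mem_inter_iff, Set.mem_setOf_eq, Set.mem_singleton_iff]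
      constructor
      · rintro ⟨h1, h2⟩
        have := key (e x) (e y) (e r) ⟨hex0, hex1, hey0, hey1, hexy,
          (by rw [← map_mul, h1, map_zero]), (by rw [← map_mul, h2, map_zero])⟩
        exact e.injective (by rw [this, map_zero])
      · rintro rfl
        exact ⟨zero_mul x, zero_mul y⟩
end
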